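/- Every edge of the enhanced hypercube Q_{n,k} (1 ≤ k ≤ n, n ≥ 3) lies on a cycle of every even length l with 4 ≤ l ≤ 2^n. -/

import Mathlib

open SimpleGraph

/-- The `n`-dimensional hypercube: vertices are binary strings of length `n`
(indexed so that bit `i+1` of the paper is index `i`), adjacent iff they
differ in exactly one bit. -/
def hypercube (n : ℕ) : SimpleGraph (Fin n → Bool) where
  Adj u v := ∃! i, u i ≠ v i
  symm := by
    constructor
    rintro u v ⟨i, hi, hu⟩
    exact ⟨i, hi.symm, fun j hj => hu j hj.symm⟩
  loopless := by
    constructor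
    rintro u ⟨i, hi, -⟩
    exact hi rfl

/-- Skip relation: `u` and `v` differ exactly in the last `k` bits
(indices `0, …, k-1`). -/
def skipRel (n k : ℕ) (u v : Fin n → Bool) : Prop :=
  u ≠ v ∧ ∀ i : Fin n, (i.val < k → u i ≠ v i) ∧ (k ≤ i.val → u i = v i)

/-- The enhanced hypercube `Q_{n,k}`: hypercube edges together with skip edges. -/
def enhanced (n k : ℕ) : SimpleGraph (Fin n → Bool) where
  Adj u v := (hypercube n).Adj u v ∨ skipRel n k u v
  symm := by
    constructor
    rintro u v (h | ⟨hne, h⟩)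
    · exact Or.inl ((hypercube n).symm.symm _ _ h)
    · exact Or.inr ⟨hne.symm, fun i =>
        ⟨fun hi => ((h i).1 hi).symm, fun hi => ((h i).2 hi).symm⟩⟩
  loopless := by
    constructor
    rintro u (h | ⟨hne, -⟩)
    · exact (hypercube n).loopless.irrefl u h
    · exact hne rfl

/-- The folded hypercube `FQ_n`: hypercube edges together with complementary edges. -/
def folded (n : ℕ) : SimpleGraph (Fin n → Bool) where
  Adj u v := (hypercube n).Adj u v ∨ (u ≠ v ∧ ∀ i, u i ≠ v i)
  symm := by
    constructor
    rintro u v (h | ⟨hne, h⟩)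
    · exact Or.inl ((hypercube n).symm.symm _ _ h)
    · exact Or.inr ⟨hne.symm, fun i => (h i).symm⟩
  loopless := by
    constructor
    rintro u (h | ⟨hne, -⟩)
    · exact (hypercube n).loopless.irrefl u h
    · exact hne rfl

/-- The Cartesian product `K₂ × G`: two copies of `G` joined by crossing edges. -/
def K2Prod {V : Type*} (G : SimpleGraph V) : SimpleGraph (Bool × V) :=
  (completeGraph Bool) □ G

/-- The edge `e` lies on a cycle of length `l` in `G`. -/
def EdgeOnCycle {V : Type*} (G : SimpleGraph V) (e : Sym2 V) (l : ℕ) : Prop :=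
  ∃ (v : V) (c : G.Walk v v), c.IsCycle ∧ c.length = l ∧ e ∈ c.edges

/-!
Call `G` edge-bipancyclic up to `N` if every edge lies on a cycle of each even length
`4 ≤ l ≤ N`. This property passes from `G` (without isolated vertices) to `K₂ □ G`, with `N`
doubled: an edge of `K₂ □ G` is closed up by a ladder consisting of a path of `G` in one copy,
the same path traversed backwards in the other copy, and two rungs. For `k ≤ m`, splitting off
the last coordinate identifies `Q_{m+1,k}` with `K₂ □ Q_{m,k}`, and the same holds for the
hypercube. Since `Q_{n,k}` is the folded hypercube `FQ_n` once `n ≤ k`, it remains to close up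
the complementary edges `x x̄` of `FQ_{m+1}`: go from `x` along a path of the half-cube of `x` to
a neighbour `z` of `x` inside that half-cube, cross the complementary edge `z z̄`, and return to
`x̄` along a path of the other half-cube; the two paths have odd lengths with any prescribed even
sum `≤ 2^(m+1) - 2`.
-/

namespace SimpleGraph.Walk

variable {V W : Type*} {G : SimpleGraph V} {H : SimpleGraph W}

theorem IsPath.isCycle_cons {x y : V} {p : G.Walk y x} (hp : p.IsPath) (h : G.Adj x y)
    (hlen : p.length ≠ 1) : (cons h p).IsCycle :=
  (cons_isCycle_iff p h).2
    ⟨hp, fun he => hlen (hp.length_eq_one_of_mem_edges (Sym2.eq_swap ▸ he))⟩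

-- Existential, so that callers can read the endpoints `f u`, `g w` up to defeq.
theorem exists_isPath_map_append_cons_map {f g : G →g H} (hf : Function.Injective f)
    (hg : Function.Injective g) (hfg : ∀ u v, f u ≠ g v) {u v v' w : V} {p : G.Walk u v}
    {q : G.Walk v' w} (h : H.Adj (f v) (g v')) (hp : p.IsPath) (hq : q.IsPath) :
    ∃ r : H.Walk (f u) (g w), r.IsPath ∧ r.length = p.length + q.length + 1 ∧
      r.support = p.support.map f ++ q.support.map g := by
  have hsupp : ((p.map f).append (.cons h (q.map g))).support =
      p.support.map f ++ q.support.map g := by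
    simp [support_append]
  refine ⟨(p.map f).append (.cons h (q.map g)), ?_,
    by simp only [length_append, length_map, length_cons]; omega, hsupp⟩
  rw [isPath_def, hsupp, List.nodup_append]
  refine ⟨hp.support_nodup.map hf, hq.support_nodup.map hg, ?_⟩
  simp only [List.mem_map]
  rintro _ ⟨a, -, rfl⟩ _ ⟨b, -, rfl⟩
  exact hfg a b

end SimpleGraph.Walk

section EdgeBipancyclic

variable {V W : Type*} {G : SimpleGraph V} {H : SimpleGraph W} {N : ℕ}

-- A path of odd length `L` from `x` to `y` closes up with the edge `yx` to a cycle of length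
-- `L + 1`, so this says that every edge lies on a cycle of each even length `4 ≤ l ≤ N`.
def EdgeBipancyclic (G : SimpleGraph V) (N : ℕ) : Prop :=
  ∀ ⦃x y⦄, G.Adj x y → ∀ L, Odd L → 3 ≤ L → L < N → ∃ p : G.Walk x y, p.IsPath ∧ p.length = L

namespace EdgeBipancyclic

theorem of_le_three (hN : N ≤ 3) : EdgeBipancyclic G N :=
  fun _ _ _ _ _ h3 hL => absurd (h3.trans_lt hL) (by omega)

theorem edgeOnCycle (hG : EdgeBipancyclic G N) {e : Sym2 V} (he : e ∈ G.edgeSet) {l : ℕ}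
    (hl : Even l) (h4 : 4 ≤ l) (hlN : l ≤ N) : EdgeOnCycle G e l := by
  induction e using Sym2.ind with | _ x y => ?_
  rw [mem_edgeSet] at he
  obtain ⟨p, hp, hlen⟩ := hG he.symm (l - 1) (Nat.Even.sub_odd (by omega) hl odd_one)
    (by omega) (by omega)
  exact ⟨x, .cons he p, hp.isCycle_cons he (by omega), by rw [Walk.length_cons]; omega,
    by simp⟩

theorem exists_isPath_of_odd (hG : EdgeBipancyclic G N) {x y : V} (hxy : G.Adj x y) {L : ℕ}
    (hL : Odd L) (hLN : L < N) : ∃ p : G.Walk x y, p.IsPath ∧ p.length = L := by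
  obtain rfl | h3 : L = 1 ∨ 3 ≤ L := by obtain ⟨j, rfl⟩ := hL; omega
  · exact ⟨hxy.toWalk, .of_adj hxy, rfl⟩
  · exact hG hxy L hL h3 hLN

-- The path is a prefix of a cycle through `xy` of length `m + 1` or `m + 2`.
theorem exists_isPath_cons (hG : EdgeBipancyclic G N) (hN : Even N) {x y : V}
    (hxy : G.Adj x y) {m : ℕ} (hm : 0 < m) (hmN : m < N) :
    ∃ z, ∃ q : G.Walk y z, (Walk.cons hxy q).IsPath ∧ q.length + 1 = m := by
  obtain rfl | hm2 := (Nat.succ_le_of_lt hm).eq_or_lt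
  · exact ⟨y, .nil, by simp [hxy.ne], rfl⟩
  obtain ⟨r, hr, hlen⟩ := hG hxy.symm (2 * (m / 2) + 1) (odd_two_mul_add_one _) (by omega)
    (by obtain ⟨n, rfl⟩ := hN; omega)
  have hc := (hr.isCycle_cons hxy (by omega)).isPath_take (n := m)
    (by rw [Walk.length_cons]; omega)
  rw [Walk.take_cons_eq _ _ _ hm.ne'] at hc
  exact ⟨_, _, hc, by rw [Walk.length_copy, Walk.take_length]; omega⟩

theorem map (hG : EdgeBipancyclic G N) (f : G ≃g H) : EdgeBipancyclic H N := by
  intro u v huv L hL h3 hLN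
  obtain ⟨x, rfl⟩ := f.surjective u
  obtain ⟨y, rfl⟩ := f.surjective v
  obtain ⟨p, hp, hlen⟩ := hG (f.map_adj_iff.1 huv) L hL h3 hLN
  exact ⟨p.map f.toHom, hp.map f.injective, by simp [hlen]⟩

theorem k2Prod (hG : EdgeBipancyclic G N) (hN : Even N) (hdeg : ∀ v, ∃ w, G.Adj v w) :
    EdgeBipancyclic (K2Prod G) (2 * N) := by
  let layer (a : Bool) : G →g K2Prod G := ⟨Prod.mk a, fun h => Or.inr ⟨h, rfl⟩⟩
  have hlayer_inj (a : Bool) : Function.Injective (layer a) := Prod.mk_right_injective a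
  have hlayer_ne {a b : Bool} (hab : a ≠ b) (u v : V) : layer a u ≠ layer b v :=
    fun h => hab (congrArg Prod.fst h)
  have hrung {a b : Bool} (hab : a ≠ b) (v : V) : (K2Prod G).Adj (a, v) (b, v) :=
    Or.inl ⟨hab, rfl⟩
  rintro ⟨a, x⟩ ⟨b, y⟩ hadj L ⟨m, rfl⟩ h3 hLN
  rcases hadj with ⟨hab, rfl : x = y⟩ | ⟨hxy, rfl : a = b⟩
  · obtain ⟨w, hxw⟩ := hdeg x
    obtain ⟨z, q, hp, hlen⟩ := hG.exists_isPath_cons hN hxw (m := m) (by omega) (by omega)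
    obtain ⟨r, hr, hrlen, -⟩ := Walk.exists_isPath_map_append_cons_map (hlayer_inj a)
      (hlayer_inj b) (hlayer_ne hab) (hrung hab z) hp hp.reverse
    refine ⟨r, hr, hrlen.trans ?_⟩
    rw [Walk.length_reverse, Walk.length_cons]
    omega
  · obtain ⟨z, q, hp, hlen⟩ := hG.exists_isPath_cons hN hxy (m := m) (by omega) (by omega)
    have hq := (Walk.cons_isPath_iff _ _).1 hp
    have hna : (!a) ≠ a := by simp
    obtain ⟨r, hr, hrlen, hrsupp⟩ := Walk.exists_isPath_map_append_cons_map (hlayer_inj !a)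
      (hlayer_inj a) (hlayer_ne hna) (hrung hna z) hp hq.1.reverse
    have hxr : (a, x) ∉ r.support := by
      rw [hrsupp, List.mem_append, List.mem_map, List.mem_map, Walk.support_reverse]
      rintro (⟨v, -, hv⟩ | ⟨v, hv, hva⟩)
      · exact hlayer_ne hna v x hv
      · exact hq.2 (hlayer_inj a hva ▸ List.mem_reverse.1 hv)
    refine ⟨.cons (hrung hna.symm x) r, (Walk.cons_isPath_iff _ _).2 ⟨hr, hxr⟩,
      congrArg (· + 1) hrlen |>.trans ?_⟩
    rw [Walk.length_reverse, Walk.length_cons]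
    omega

end EdgeBipancyclic

end EdgeBipancyclic

theorem Fin.existsUnique_iff_last_or_castSucc {m : ℕ} {P : Fin (m + 1) → Prop} :
    (∃! i, P i) ↔ (P (Fin.last m) ∧ ∀ j : Fin m, ¬ P j.castSucc) ∨
      (¬ P (Fin.last m) ∧ ∃! j : Fin m, P j.castSucc) := by
  constructor
  · rintro ⟨i, hi, huniq⟩
    induction i using Fin.lastCases with
    | last => exact Or.inl ⟨hi, fun j hj => (Fin.castSucc_lt_last j).ne (huniq _ hj)⟩
    | cast i =>
      refine Or.inr ⟨fun h => (Fin.castSucc_lt_last i).ne' (huniq _ h),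
        i, hi, fun j hj => Fin.castSucc_injective m (huniq _ hj)⟩
  · rintro (⟨hl, hc⟩ | ⟨hl, j, hj, huniq⟩)
    · refine ⟨Fin.last m, hl, fun i hi => ?_⟩
      induction i using Fin.lastCases with
      | last => rfl
      | cast i => exact absurd hi (hc i)
    · refine ⟨j.castSucc, hj, fun i hi => ?_⟩
      induction i using Fin.lastCases with
      | last => exact absurd hi hl
      | cast i => rw [huniq i hi]

theorem Fin.snoc_compl {m : ℕ} (u : Fin m → Bool) (a : Bool) :
    (Fin.snoc u a : Fin (m + 1) → Bool)ᶜ = Fin.snoc uᶜ (!a) := by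
  funext i
  induction i using Fin.lastCases <;> simp

theorem hypercube_snoc_adj_snoc {m : ℕ} {u v : Fin m → Bool} {a b : Bool} :
    (hypercube (m + 1)).Adj (Fin.snoc u a) (Fin.snoc v b) ↔
      (K2Prod (hypercube m)).Adj (a, u) (b, v) := by
  simp only [hypercube, K2Prod, boxProd_adj, Fin.existsUnique_iff_last_or_castSucc,
    Fin.snoc_last, Fin.snoc_castSucc, completeGraph_eq_top, top_adj, not_not, funext_iff]
  tauto

theorem hypercube_adj_update {n : ℕ} (u : Fin n → Bool) (i : Fin n) :
    (hypercube n).Adj u (Function.update u i (!u i)) :=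
  ⟨i, by simp, fun j hj => by_contra fun h => hj (by simp [Function.update_of_ne h])⟩

theorem hypercube_compl_adj_compl {n : ℕ} {u v : Fin n → Bool} :
    (hypercube n).Adj uᶜ vᶜ ↔ (hypercube n).Adj u v := by
  simp only [hypercube, Pi.compl_apply, ne_eq, compl_inj_iff]

def hypercubeSnocIso (m : ℕ) : K2Prod (hypercube m) ≃g hypercube (m + 1) :=
  ⟨Fin.snocEquiv fun _ => Bool, hypercube_snoc_adj_snoc⟩

theorem hypercube_edgeBipancyclic : ∀ n, EdgeBipancyclic (hypercube n) (2 ^ n)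
  | 0 | 1 => .of_le_three (by norm_num)
  | m + 2 => by
    have := (hypercube_edgeBipancyclic (m + 1)).k2Prod (Nat.even_pow.2 ⟨even_two, by omega⟩)
      fun u => ⟨_, hypercube_adj_update u 0⟩
    rw [← pow_succ'] at this
    exact this.map (hypercubeSnocIso (m + 1))

theorem hypercube_le_folded (n : ℕ) : hypercube n ≤ folded n :=
  fun _ _ => Or.inl

theorem folded_adj_compl {n : ℕ} (u : Fin (n + 1) → Bool) : (folded (n + 1)).Adj u uᶜ :=
  Or.inr ⟨fun h => by simpa using congrFun h 0, fun i => by simp⟩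

def foldedLayer (m : ℕ) (a : Bool) : hypercube m →g folded (m + 1) :=
  ⟨(Fin.snoc · a), fun h => Or.inl (hypercube_snoc_adj_snoc.2 (Or.inr ⟨h, rfl⟩))⟩

theorem foldedLayer_apply {m : ℕ} (a : Bool) (u : Fin m → Bool) :
    foldedLayer m a u = Fin.snoc u a :=
  rfl

theorem folded_exists_isPath_compl {m : ℕ} (hm : 0 < m) (x : Fin (m + 1) → Bool) {L : ℕ}
    (hL : Odd L) (h3 : 3 ≤ L) (hLN : L < 2 ^ (m + 1)) :
    ∃ p : (folded (m + 1)).Walk x xᶜ, p.IsPath ∧ p.length = L := by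
  induction x using Fin.snocCases with | snoc x₀ a => ?_
  rw [Fin.snoc_compl]
  obtain ⟨j, rfl⟩ := hL
  obtain ⟨P, hP⟩ : Even (2 ^ m) := Nat.even_pow.2 ⟨even_two, hm.ne'⟩
  rw [pow_succ] at hLN
  -- the two half-cube paths get the odd lengths `2 i + 1` and `2 (j - 1 - i) + 1`
  set i := min (j - 1) (P - 1)
  have hQ := hypercube_edgeBipancyclic m
  let z₀ := Function.update x₀ ⟨0, hm⟩ (!x₀ ⟨0, hm⟩)
  have hz₀ : (hypercube m).Adj x₀ z₀ := hypercube_adj_update x₀ _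
  obtain ⟨r₁, hr₁, hlen₁⟩ := hQ.exists_isPath_of_odd hz₀ (odd_two_mul_add_one i) (by omega)
  obtain ⟨r₂, hr₂, hlen₂⟩ := hQ.exists_isPath_of_odd
    (hypercube_compl_adj_compl.2 hz₀.symm) (odd_two_mul_add_one (j - 1 - i)) (by omega)
  have hlayer_inj (b : Bool) : Function.Injective (foldedLayer m b) :=
    fun u v h => by simpa [foldedLayer_apply] using h
  obtain ⟨r, hr, hrlen, -⟩ := Walk.exists_isPath_map_append_cons_map (hlayer_inj a)
    (hlayer_inj !a) (fun _ _ h => by simp [foldedLayer_apply] at h)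
    (by simpa [foldedLayer_apply, Fin.snoc_compl] using folded_adj_compl (Fin.snoc z₀ a)) hr₁ hr₂
  exact ⟨r, hr, hrlen.trans (by omega)⟩

theorem folded_edgeBipancyclic : ∀ n, EdgeBipancyclic (folded n) (2 ^ n)
  | 0 | 1 => .of_le_three (by norm_num)
  | m + 2 => by
    rintro x y (hxy | ⟨-, hxy⟩) L hL h3 hLN
    · obtain ⟨p, hp, hlen⟩ := hypercube_edgeBipancyclic (m + 2) hxy L hL h3 hLN
      exact ⟨p.mapLe (hypercube_le_folded _), (Walk.isPath_mapLe _).2 hp, by simp [hlen]⟩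
    · obtain rfl : y = xᶜ := funext fun i => Bool.eq_not.2 (hxy i).symm
      exact folded_exists_isPath_compl m.succ_pos x hL h3 hLN

theorem skipRel_snoc_snoc {m k : ℕ} (hk : k ≤ m) {u v : Fin m → Bool} {a b : Bool} :
    skipRel (m + 1) k (Fin.snoc u a) (Fin.snoc v b) ↔ skipRel m k u v ∧ a = b := by
  simp only [skipRel, Fin.forall_fin_succ', Fin.snoc_last, Fin.snoc_castSucc, Fin.val_castSucc,
    Fin.val_last, Ne, Fin.snoc_inj]
  have : ¬ m < k := by omega
  simp only [this, false_imp_iff, true_and, hk, forall_const]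
  tauto

theorem enhanced_snoc_adj_snoc {m k : ℕ} (hk : k ≤ m) {u v : Fin m → Bool} {a b : Bool} :
    (enhanced (m + 1) k).Adj (Fin.snoc u a) (Fin.snoc v b) ↔
      (K2Prod (enhanced m k)).Adj (a, u) (b, v) := by
  change (hypercube (m + 1)).Adj _ _ ∨ skipRel (m + 1) k _ _ ↔ _
  rw [hypercube_snoc_adj_snoc, skipRel_snoc_snoc hk]
  simp only [K2Prod, boxProd_adj, enhanced]
  tauto

def enhancedSnocIso {m k : ℕ} (hk : k ≤ m) : K2Prod (enhanced m k) ≃g enhanced (m + 1) k :=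
  ⟨Fin.snocEquiv fun _ => Bool, enhanced_snoc_adj_snoc hk⟩

theorem enhanced_eq_folded {n k : ℕ} (h : n ≤ k) : enhanced n k = folded n := by
  ext u v
  simp only [enhanced, folded, skipRel]
  have (i : Fin n) : i.val < k := i.isLt.trans_le h
  simp [this]

theorem enhanced_edgeBipancyclic (k : ℕ) : ∀ n, EdgeBipancyclic (enhanced n k) (2 ^ n)
  | 0 | 1 => .of_le_three (by norm_num)
  | m + 2 => by
    by_cases hk : k ≤ m + 1
    · have := (enhanced_edgeBipancyclic k (m + 1)).k2Prod (Nat.even_pow.2 ⟨even_two, by omega⟩)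
        fun u => ⟨_, Or.inl (hypercube_adj_update u 0)⟩
      rw [← pow_succ'] at this
      exact this.map (enhancedSnocIso hk)
    · rw [enhanced_eq_folded (by omega)]
      exact folded_edgeBipancyclic (m + 2)

theorem stmt13_general (n k : ℕ) :
    ∀ e ∈ (enhanced n k).edgeSet, ∀ l : ℕ, Even l → 4 ≤ l → l ≤ 2 ^ n →
      EdgeOnCycle (enhanced n k) e l :=
  fun _ he _ hl h4 hlN => (enhanced_edgeBipancyclic k n).edgeOnCycle he hl h4 hlN

/-- Every edge of `Q_{n,k}` (`1 ≤ k ≤ n`, `n ≥ 3`) lies on a cycle of every even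
length `l` with `4 ≤ l ≤ 2^n`. -/
theorem stmt13 (n k : ℕ) (h1 : 1 ≤ k) (h2 : k ≤ n) (hn : 3 ≤ n) :
    ∀ e ∈ (enhanced n k).edgeSet, ∀ l : ℕ, Even l → 4 ≤ l → l ≤ 2 ^ n →
      EdgeOnCycle (enhanced n k) e l :=
  stmt13_general n k
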